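/- arXiv:2205.08546 — 2 statements merged into one kernel-verified Lean document; each statement's English description precedes it below -/
import Mathlib

section
/- Let M be a rank-1 projective measurement assemblage in dimension d with m settings (so o = d outcomes), with the uniform weighting p x = 1/m, and define the state assemblage σ x a = (1/d)•(M x a)ᵀ (transposition in the computational basis). Let T(M) be the maximum over deterministic labelings λ : Fin m → Fin d of ‖∑ x, M x (λ x)‖_∞. Then σ is a state assemblage and its steerability satisfies S(σ,p) ≥ 1 − T(M)/m. -/
open Matrix Kronecker BigOperators ComplexOrder

noncomputable section

def IsDensityMatrix {n : Type*} [Fintype n] [DecidableEq n] (ρ : Matrix n n ℂ) : Prop :=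
  ρ.PosSemidef ∧ ρ.trace = 1

noncomputable def traceNorm {n : Type*} [Fintype n] [DecidableEq n] (X : Matrix n n ℂ) : ℝ :=
  (((Matrix.posSemidef_conjTranspose_mul_self X).1.eigenvectorUnitary.1 *
      diagonal (((↑) : ℝ → ℂ) ∘ Real.sqrt ∘ (Matrix.posSemidef_conjTranspose_mul_self X).1.eigenvalues) *
      (star (Matrix.posSemidef_conjTranspose_mul_self X).1.eigenvectorUnitary : Matrix n n ℂ)).trace).re

noncomputable def specNorm {n : Type*} [Fintype n] [DecidableEq n] (X : Matrix n n ℂ) : ℝ :=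
  ‖Matrix.toEuclideanCLM (𝕜 := ℂ) X‖

def ptrace1 {n e : Type*} [Fintype n] (ρ : Matrix (n × e) (n × e) ℂ) : Matrix e e ℂ :=
  Matrix.of fun j j' => ∑ i, ρ (i, j) (i, j')

def IsAssemblage {d m o : ℕ} (M : Fin m → Fin o → Matrix (Fin d) (Fin d) ℂ) : Prop :=
  (∀ x a, (M x a).PosSemidef) ∧ ∀ x, ∑ a, M x a = 1

def IsWeighting {m : ℕ} (p : Fin m → ℝ) : Prop :=
  (∀ x, 0 < p x) ∧ ∑ x, p x = 1

noncomputable def Ddiamond {d m o : ℕ} (p : Fin m → ℝ)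
    (M N : Fin m → Fin o → Matrix (Fin d) (Fin d) ℂ) : ℝ :=
  (1 / 2) * ∑ x, p x *
    ⨆ ρ : {ρ : Matrix (Fin d × Fin d) (Fin d × Fin d) ℂ // IsDensityMatrix ρ},
      ∑ a, traceNorm (ptrace1 (((M x a - N x a) ⊗ₖ (1 : Matrix (Fin d) (Fin d) ℂ)) * ρ.1))

def JointlyMeasurable {d m o : ℕ} (F : Fin m → Fin o → Matrix (Fin d) (Fin d) ℂ) : Prop :=
  ∃ G : (Fin m → Fin o) → Matrix (Fin d) (Fin d) ℂ,
    (∀ lam, (G lam).PosSemidef) ∧ (∑ lam, G lam = 1) ∧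
    ∀ x a, F x a = ∑ lam ∈ Finset.univ.filter (fun lam => lam x = a), G lam

noncomputable def Incomp {d m o : ℕ} (p : Fin m → ℝ)
    (M : Fin m → Fin o → Matrix (Fin d) (Fin d) ℂ) : ℝ :=
  ⨅ F : {F : Fin m → Fin o → Matrix (Fin d) (Fin d) ℂ // IsAssemblage F ∧ JointlyMeasurable F},
    Ddiamond p M F.1


def IsStateAssemblage {d m o : ℕ} (σ : Fin m → Fin o → Matrix (Fin d) (Fin d) ℂ) : Prop :=
  (∀ x a, (σ x a).PosSemidef) ∧ ∀ x, ∑ a, (σ x a).trace = 1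

def HasLHSModel {d m o : ℕ} (σ : Fin m → Fin o → Matrix (Fin d) (Fin d) ℂ) : Prop :=
  ∃ σ' : (Fin m → Fin o) → Matrix (Fin d) (Fin d) ℂ,
    (∀ lam, (σ' lam).PosSemidef) ∧ (∑ lam, (σ' lam).trace = 1) ∧
    ∀ x a, σ x a = ∑ lam ∈ Finset.univ.filter (fun lam => lam x = a), σ' lam

noncomputable def Steerability {d m o : ℕ} (p : Fin m → ℝ)
    (σ : Fin m → Fin o → Matrix (Fin d) (Fin d) ℂ) : ℝ :=
  ⨅ τ : {τ : Fin m → Fin o → Matrix (Fin d) (Fin d) ℂ // IsStateAssemblage τ ∧ HasLHSModel τ},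
    (1 / 2) * ∑ x, p x * ∑ a, traceNorm (σ x a - τ.1 x a)

def IsRankOneProjective {d m : ℕ} (M : Fin m → Fin d → Matrix (Fin d) (Fin d) ℂ) : Prop :=
  ∀ x a, (M x a).IsHermitian ∧ M x a * M x a = M x a ∧ (M x a).trace = 1

/-!
Let `τ` be an LHS assemblage with hidden states `σ' λ`. For `P = (M x a)ᵀ` we have `0 ≤ P ≤ 1`,
and in an eigenbasis of a Hermitian `X` one reads off `2 Re Tr (P X) ≤ ‖X‖₁ + Tr X`. Applied to
`X = σ x a - τ x a`, whose traces sum to `0` over `a`, and using `Tr (P σ x a) = 1/d` for a rank-one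
projection, this gives `∑ a, ‖σ x a - τ x a‖₁ ≥ 2 - 2 ∑ a, Re Tr ((M x a)ᵀ τ x a)`. Regrouping the
double sum over `x, a` by hidden variables turns `∑ x, ∑ a, Tr ((M x a)ᵀ τ x a)` into
`∑ λ, Tr ((∑ x, M x (λ x))ᵀ σ' λ) ≤ T(M) ∑ λ, Tr (σ' λ) = T(M)`; averaging over `x` concludes.
-/

namespace Matrix

variable {n : Type*} [Fintype n] [DecidableEq n]

lemma IsHermitian.trace_mul_eq_sum_eigenvalues {𝕜 : Type*} [RCLike 𝕜] {X : Matrix n n 𝕜}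
    (hX : X.IsHermitian) (P : Matrix n n 𝕜) :
    (P * X).trace =
      ∑ i, (star ⇑(hX.eigenvectorBasis i) ⬝ᵥ (P *ᵥ ⇑(hX.eigenvectorBasis i))) *
        (hX.eigenvalues i : 𝕜) := by
  set U : Matrix n n 𝕜 := (hX.eigenvectorUnitary : Matrix n n 𝕜)
  have hdiag : ∀ i, (star U * P * U) i i =
      star ⇑(hX.eigenvectorBasis i) ⬝ᵥ (P *ᵥ ⇑(hX.eigenvectorBasis i)) := by
    intro i
    simp only [mul_apply, dotProduct, mulVec, Finset.sum_mul, Finset.mul_sum]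
    rw [Finset.sum_comm]
    simp [U, mul_assoc]
  conv_lhs => rw [hX.spectral_theorem, Unitary.conjStarAlgAut_apply, ← mul_assoc,
    trace_mul_cycle, ← mul_assoc]
  simp [trace, mul_diagonal, hdiag, U]

lemma IsHermitian.star_dotProduct_eigenvectorBasis_self {𝕜 : Type*} [RCLike 𝕜]
    {X : Matrix n n 𝕜} (hX : X.IsHermitian) (i : n) :
    star ⇑(hX.eigenvectorBasis i) ⬝ᵥ ⇑(hX.eigenvectorBasis i) = 1 := by
  rw [dotProduct_comm, ← EuclideanSpace.inner_eq_star_dotProduct, inner_self_eq_norm_sq_to_K,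
    hX.eigenvectorBasis.orthonormal.1 i]
  simp

lemma re_star_dotProduct_mulVec_le_specNorm (A : Matrix n n ℂ) {v : EuclideanSpace ℂ n}
    (hv : ‖v‖ = 1) : (star ⇑v ⬝ᵥ (A *ᵥ ⇑v)).re ≤ specNorm A := by
  have hinner :
      star ⇑v ⬝ᵥ (A *ᵥ ⇑v) = inner ℂ v (toEuclideanCLM (𝕜 := ℂ) A v) := by
    rw [EuclideanSpace.inner_eq_star_dotProduct, dotProduct_comm]
    rfl
  calc (star ⇑v ⬝ᵥ (A *ᵥ ⇑v)).re ≤ ‖v‖ * ‖toEuclideanCLM (𝕜 := ℂ) A v‖ :=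
        hinner ▸ re_inner_le_norm (𝕜 := ℂ) _ _
    _ ≤ ‖v‖ * (specNorm A * ‖v‖) := by gcongr; exact ContinuousLinearMap.le_opNorm _ _
    _ = specNorm A := by rw [hv, one_mul, mul_one]

lemma PosSemidef.re_trace_mul_le_specNorm_mul (A : Matrix n n ℂ) {ρ : Matrix n n ℂ}
    (hρ : ρ.PosSemidef) : (A * ρ).trace.re ≤ specNorm A * ρ.trace.re := by
  rw [hρ.1.trace_mul_eq_sum_eigenvalues, hρ.1.trace_eq_sum_eigenvalues, Complex.re_sum,
    Complex.re_sum, Finset.mul_sum]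
  refine Finset.sum_le_sum fun i _ => ?_
  simp only [RCLike.ofReal_eq_complex_ofReal, Complex.re_mul_ofReal, Complex.ofReal_re]
  exact mul_le_mul_of_nonneg_right
    (re_star_dotProduct_mulVec_le_specNorm A (hρ.1.eigenvectorBasis.orthonormal.1 i))
    (hρ.eigenvalues_nonneg i)

lemma IsHermitian.traceNorm_eq_sum_abs_eigenvalues {X : Matrix n n ℂ} (hX : X.IsHermitian) :
    traceNorm X = ∑ i, |hX.eigenvalues i| := by
  have hXX := (posSemidef_conjTranspose_mul_self X).1
  have hsqrt : traceNorm X = (cfc Real.sqrt (Xᴴ * X)).trace.re := by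
    rw [hXX.cfc_eq]; rfl
  have hsq : Xᴴ * X = cfc (fun x : ℝ => x ^ 2) X := by
    rw [cfc_pow_id (R := ℝ) X 2 hX.isSelfAdjoint, hX.eq, pow_two]
  rw [hsqrt, hsq, ← cfc_comp' Real.sqrt (fun x : ℝ => x ^ 2) X (ha := hX.isSelfAdjoint),
    hX.cfc_eq, IsHermitian.cfc, Unitary.conjStarAlgAut_apply, trace_mul_cycle,
    Unitary.coe_star_mul_self, one_mul, trace_diagonal, Complex.re_sum]
  simp [Real.sqrt_sq_eq_abs]

lemma IsHermitian.two_mul_re_trace_mul_le {P X : Matrix n n ℂ} (hP : P.PosSemidef)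
    (hP1 : (1 - P).PosSemidef) (hX : X.IsHermitian) :
    2 * (P * X).trace.re ≤ traceNorm X + X.trace.re := by
  rw [hX.trace_mul_eq_sum_eigenvalues, hX.traceNorm_eq_sum_abs_eigenvalues,
    hX.trace_eq_sum_eigenvalues, Complex.re_sum, Complex.re_sum, Finset.mul_sum,
    ← Finset.sum_add_distrib]
  refine Finset.sum_le_sum fun i _ => ?_
  set v := ⇑(hX.eigenvectorBasis i)
  have hq0 : 0 ≤ (star v ⬝ᵥ (P *ᵥ v)).re := hP.re_dotProduct_nonneg v
  have hq1 : (star v ⬝ᵥ (P *ᵥ v)).re ≤ 1 := by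
    have h := hP1.re_dotProduct_nonneg v
    rw [sub_mulVec, one_mulVec, dotProduct_sub, hX.star_dotProduct_eigenvectorBasis_self] at h
    simpa using h
  simp only [RCLike.ofReal_eq_complex_ofReal, Complex.re_mul_ofReal, Complex.ofReal_re]
  rcases abs_cases (hX.eigenvalues i) with ⟨h, hsign⟩ | ⟨h, hsign⟩ <;> rw [h] <;> nlinarith

lemma sum_two_mul_re_trace_mul_le_sum_traceNorm {ι : Type*} [Fintype ι]
    {P X : ι → Matrix n n ℂ}
    (hP : ∀ a, (P a).PosSemidef) (hP1 : ∀ a, (1 - P a).PosSemidef)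
    (hX : ∀ a, (X a).IsHermitian) (htr : ∑ a, (X a).trace = 0) :
    2 * ∑ a, (P a * X a).trace.re ≤ ∑ a, traceNorm (X a) :=
  calc 2 * ∑ a, (P a * X a).trace.re
      ≤ ∑ a, (traceNorm (X a) + (X a).trace.re) := by
        rw [Finset.mul_sum]
        exact Finset.sum_le_sum fun a _ => (hX a).two_mul_re_trace_mul_le (hP a) (hP1 a)
    _ = ∑ a, traceNorm (X a) := by
        rw [Finset.sum_add_distrib, ← Complex.re_sum, htr, Complex.zero_re, add_zero]

lemma PosSemidef.re_trace_transpose_mul_le_specNorm_mul (A : Matrix n n ℂ) {ρ : Matrix n n ℂ}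
    (hρ : ρ.PosSemidef) : (Aᵀ * ρ).trace.re ≤ specNorm A * ρ.trace.re := by
  have h := hρ.transpose.re_trace_mul_le_specNorm_mul A
  rwa [trace_transpose, ← trace_transpose (A * ρᵀ), transpose_mul, transpose_transpose,
    trace_mul_comm] at h

end Matrix

open Matrix

section Assemblages

variable {d m o : ℕ}

lemma IsAssemblage.posSemidef_one_sub {M : Fin m → Fin o → Matrix (Fin d) (Fin d) ℂ}
    (hM : IsAssemblage M) (x : Fin m) (a : Fin o) : (1 - M x a).PosSemidef := by
  rw [← hM.2 x, ← Finset.add_sum_erase _ _ (Finset.mem_univ a), add_sub_cancel_left]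
  exact posSemidef_sum _ fun b _ => hM.1 x b

lemma IsAssemblage.isStateAssemblage_smul_transpose
    {M : Fin m → Fin o → Matrix (Fin d) (Fin d) ℂ} (hd : 0 < d) (hM : IsAssemblage M) :
    IsStateAssemblage (fun x a => (1 / (d : ℝ)) • (M x a)ᵀ) := by
  refine ⟨fun x a => (hM.1 x a).transpose.smul (by positivity), fun x => ?_⟩
  simp_rw [trace_smul, trace_transpose, ← Finset.smul_sum, ← trace_sum, hM.2 x, trace_one,
    Fintype.card_fin]
  rw [Complex.real_smul]
  push_cast
  field_simp

lemma isStateAssemblage_of_hiddenStates {σ' : (Fin m → Fin o) → Matrix (Fin d) (Fin d) ℂ}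
    (hpsd : ∀ lam, (σ' lam).PosSemidef) (htr : ∑ lam, (σ' lam).trace = 1) :
    IsStateAssemblage fun x a =>
      ∑ lam ∈ Finset.univ.filter (fun lam => lam x = a), σ' lam := by
  refine ⟨fun x a => posSemidef_sum _ fun lam _ => hpsd lam, fun x => ?_⟩
  simp_rw [trace_sum]
  rw [Finset.sum_fiberwise, htr]

lemma nonempty_lhsStateAssemblage (hd : 0 < d) (ho : 0 < o) :
    Nonempty {τ : Fin m → Fin o → Matrix (Fin d) (Fin d) ℂ //
      IsStateAssemblage τ ∧ HasLHSModel τ} := by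
  let σ' : (Fin m → Fin o) → Matrix (Fin d) (Fin d) ℂ :=
    fun lam => if lam = fun _ => ⟨0, ho⟩ then (1 / (d : ℝ)) • 1 else 0
  have hpsd : ∀ lam, (σ' lam).PosSemidef := fun lam => by
    unfold σ'
    split_ifs
    exacts [PosSemidef.one.smul (by positivity), PosSemidef.zero]
  have htr : ∑ lam, (σ' lam).trace = 1 := by
    simp only [σ', apply_ite trace, trace_zero, Finset.sum_ite_eq', Finset.mem_univ, if_true,
      trace_smul, trace_one, Fintype.card_fin, Complex.real_smul]
    push_cast
    field_simp
  exact ⟨⟨_, isStateAssemblage_of_hiddenStates hpsd htr, σ', hpsd, htr, fun _ _ => rfl⟩⟩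

lemma sum_trace_mul_sum_filter (N : Fin o → Matrix (Fin d) (Fin d) ℂ)
    (σ' : (Fin m → Fin o) → Matrix (Fin d) (Fin d) ℂ) (x : Fin m) :
    ∑ a, (N a * ∑ lam ∈ Finset.univ.filter (fun lam => lam x = a), σ' lam).trace
      = ∑ lam, (N (lam x) * σ' lam).trace := by
  simp_rw [Finset.mul_sum, trace_sum]
  rw [← Finset.sum_fiberwise Finset.univ (fun lam : Fin m → Fin o => lam x)]
  refine Finset.sum_congr rfl fun a _ => Finset.sum_congr rfl fun lam hlam => ?_
  rw [(Finset.mem_filter.1 hlam).2]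

lemma sum_re_trace_transpose_mul_le_iSup_specNorm
    (M : Fin m → Fin o → Matrix (Fin d) (Fin d) ℂ)
    {σ' : (Fin m → Fin o) → Matrix (Fin d) (Fin d) ℂ}
    (hpsd : ∀ lam, (σ' lam).PosSemidef) (htr : ∑ lam, (σ' lam).trace = 1) :
    ∑ x, ∑ a,
        ((M x a)ᵀ * ∑ lam ∈ Finset.univ.filter (fun lam => lam x = a), σ' lam).trace.re
      ≤ ⨆ lam : Fin m → Fin o, specNorm (∑ x, M x (lam x)) := by
  set T := ⨆ lam : Fin m → Fin o, specNorm (∑ x, M x (lam x))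
  have hT : ∀ lam : Fin m → Fin o, specNorm (∑ x, M x (lam x)) ≤ T :=
    le_ciSup (Finite.bddAbove_range _)
  calc _ = ∑ lam, ((∑ x, M x (lam x))ᵀ * σ' lam).trace.re := by
        simp_rw [← Complex.re_sum, sum_trace_mul_sum_filter, transpose_sum, Finset.sum_mul,
          trace_sum]
        rw [Finset.sum_comm]
    _ ≤ ∑ lam, specNorm (∑ x, M x (lam x)) * (σ' lam).trace.re :=
        Finset.sum_le_sum fun lam _ => (hpsd lam).re_trace_transpose_mul_le_specNorm_mul _
    _ ≤ ∑ lam, T * (σ' lam).trace.re := by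
        gcongr with lam
        · exact (Complex.nonneg_iff.1 (hpsd lam).trace_nonneg).1
        · exact hT lam
    _ = T := by rw [← Finset.mul_sum, ← Complex.re_sum, htr, Complex.one_re, mul_one]

end Assemblages

section RankOneProjective

variable {d m : ℕ} {M : Fin m → Fin d → Matrix (Fin d) (Fin d) ℂ}

lemma IsRankOneProjective.trace_transpose_mul_smul_transpose (hM : IsRankOneProjective M)
    (x : Fin m) (a : Fin d) (c : ℝ) : ((M x a)ᵀ * (c • (M x a)ᵀ)).trace = c := by
  rw [mul_smul_comm, ← transpose_mul, (hM x a).2.1, trace_smul, trace_transpose, (hM x a).2.2,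
    Complex.real_smul, mul_one]

lemma IsRankOneProjective.two_sub_two_mul_sum_re_trace_le_sum_traceNorm (hd : 0 < d)
    (hM : IsAssemblage M) (hproj : IsRankOneProjective M)
    {τ : Fin m → Fin d → Matrix (Fin d) (Fin d) ℂ} (hτ : IsStateAssemblage τ) (x : Fin m) :
    2 - 2 * ∑ a, ((M x a)ᵀ * τ x a).trace.re
      ≤ ∑ a, traceNorm ((1 / (d : ℝ)) • (M x a)ᵀ - τ x a) := by
  have hσ := hM.isStateAssemblage_smul_transpose hd
  have h := sum_two_mul_re_trace_mul_le_sum_traceNorm (P := fun a => (M x a)ᵀ)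
    (fun a => (hM.1 x a).transpose)
    (fun a => by simpa using (hM.posSemidef_one_sub x a).transpose)
    (fun a => (hσ.1 x a).1.sub (hτ.1 x a).1)
    (by simp_rw [trace_sub, Finset.sum_sub_distrib, hσ.2 x, hτ.2 x, sub_self])
  have hσx : ∑ a, ((M x a)ᵀ * ((1 / (d : ℝ)) • (M x a)ᵀ)).trace.re = 1 := by
    simp only [hproj.trace_transpose_mul_smul_transpose, Complex.ofReal_re, Finset.sum_const,
      Finset.card_univ, Fintype.card_fin, nsmul_eq_mul]
    field_simp
  simp only [mul_sub, trace_sub, Complex.sub_re, Finset.sum_sub_distrib, hσx] at h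
  linarith

end RankOneProjective

/-- For a rank-1 projective measurement assemblage `M` with uniform weighting, the state
assemblage `σ x a = (1/d) • (M x a)ᵀ` (obtained from the maximally entangled state) is a
valid state assemblage with steerability at least `1 - T(M)/m`. -/
theorem steerability_transposed_assemblage_lower_bound {d m : ℕ} (hd : 0 < d) (hm : 0 < m)
    (M : Fin m → Fin d → Matrix (Fin d) (Fin d) ℂ)
    (hM : IsAssemblage M) (hproj : IsRankOneProjective M) :
    IsStateAssemblage (fun x a => (1 / (d : ℝ)) • (M x a)ᵀ) ∧
    1 - (⨆ lam : Fin m → Fin d, specNorm (∑ x, M x (lam x))) / (m : ℝ)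
      ≤ Steerability (fun _ => 1 / (m : ℝ)) (fun x a => (1 / (d : ℝ)) • (M x a)ᵀ) := by
  set T := ⨆ lam : Fin m → Fin d, specNorm (∑ x, M x (lam x))
  -- `⨅` over an empty type would be `0`, so `le_ciInf` needs an LHS assemblage to exist
  have hne := nonempty_lhsStateAssemblage (m := m) hd hd
  refine ⟨hM.isStateAssemblage_smul_transpose hd,
    le_ciInf fun ⟨τ, hτ, σ', hσ'psd, hσ'tr, hτσ'⟩ => ?_⟩
  set t := fun x => ∑ a, ((M x a)ᵀ * τ x a).trace.re
  have ht : ∑ x, t x ≤ T := by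
    simpa only [t, hτσ'] using sum_re_trace_transpose_mul_le_iSup_specNorm M hσ'psd hσ'tr
  calc 1 - T / m ≤ 1 - (∑ x, t x) / m := by gcongr
    _ = (1 / 2) * ((1 / m) * ∑ x, (2 - 2 * t x)) := by
        rw [Finset.sum_sub_distrib, ← Finset.mul_sum, Finset.sum_const, Finset.card_univ,
          Fintype.card_fin, nsmul_eq_mul]
        field_simp
    _ ≤ 1 / 2 * ∑ x, (1 / m) * ∑ a, traceNorm ((1 / (d : ℝ)) • (M x a)ᵀ - τ x a) := by
        rw [Finset.mul_sum]
        gcongr with x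
        exact hproj.two_sub_two_mul_sum_re_trace_le_sum_traceNorm hd hM hτ x
end
end

section
/- Let M and N be measurement assemblages in dimension d with m settings and o = 2 outcomes (dichotomic measurements), and let p be a weighting. Then the weighted diamond distance is attained without entanglement and is given in closed form by D⋄(M,N) = ∑ x, p x · ‖M x 0 − N x 0‖_∞. -/
open Matrix Kronecker BigOperators ComplexOrder

noncomputable section

/-! Since `M x 1 - N x 1 = -(M x 0 - N x 0)`, both outcomes of setting `x` contribute equally, and
it suffices to show `sup_ρ ‖Tr₁[(Δ ⊗ 1) ρ]‖₁ = ‖Δ‖_∞` for a Hermitian `Δ`. The matrix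
`T = Tr₁[(Δ ⊗ 1) ρ]` is Hermitian, so `|T| = T (P - Q)` for its spectral projections `P, Q` onto the
nonnegative and negative eigenvalues. Hence `‖T‖₁ = Tr[(Δ ⊗ (P - Q)) ρ] ≤ ‖Δ‖_∞`, because
`‖Δ‖_∞ - Δ ⊗ (P - Q) = (‖Δ‖_∞ - Δ) ⊗ P + (‖Δ‖_∞ + Δ) ⊗ Q` is positive semidefinite. The bound is
attained by the product state `|v⟩⟨v| ⊗ |w⟩⟨w|`, where `v` is a unit eigenvector of `Δ` for an
eigenvalue of modulus `‖Δ‖_∞`. -/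

section

open scoped Matrix.Norms.L2Operator MatrixOrder

section Norms

variable {n : Type*} [Fintype n] [DecidableEq n]

theorem traceNorm_eq_re_trace_abs (X : Matrix n n ℂ) : traceNorm X = (CFC.abs X).trace.re := by
  rw [CFC.abs, CFC.sqrt_eq_real_sqrt _ (star_mul_self_nonneg X), cfcₙ_eq_cfc, star_eq_conjTranspose,
    IsHermitian.cfc_eq (posSemidef_conjTranspose_mul_self X).1]
  rfl

theorem traceNorm_neg (X : Matrix n n ℂ) : traceNorm (-X) = traceNorm X := by
  rw [traceNorm_eq_re_trace_abs, traceNorm_eq_re_trace_abs, CFC.abs_neg]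

theorem traceNorm_smul (r : ℂ) (X : Matrix n n ℂ) : traceNorm (r • X) = ‖r‖ * traceNorm X := by
  rw [traceNorm_eq_re_trace_abs, traceNorm_eq_re_trace_abs, CFC.abs_smul, trace_smul,
    Complex.real_smul, Complex.re_ofReal_mul]

theorem Matrix.PosSemidef.traceNorm_eq {X : Matrix n n ℂ} (hX : X.PosSemidef) :
    traceNorm X = X.trace.re := by
  rw [traceNorm_eq_re_trace_abs, CFC.abs_of_nonneg X hX.nonneg]

theorem specNorm_eq_norm (X : Matrix n n ℂ) : specNorm X = ‖X‖ := rfl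

end Norms

theorem Matrix.neg_kronecker {l m n p α : Type*} [Ring α] (A : Matrix l m α) (B : Matrix n p α) :
    (-A) ⊗ₖ B = -(A ⊗ₖ B) := by
  ext
  simp

section PartialTrace

variable {n e : Type*} [Fintype n]

theorem ptrace1_neg (X : Matrix (n × e) (n × e) ℂ) : ptrace1 (-X) = -ptrace1 X := by
  ext j j'
  simp [ptrace1]

theorem ptrace1_kronecker (B : Matrix n n ℂ) (Y : Matrix e e ℂ) :
    ptrace1 (B ⊗ₖ Y) = B.trace • Y := by
  ext j j'
  simp [ptrace1, trace, Finset.sum_mul]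

theorem conjTranspose_ptrace1 (X : Matrix (n × e) (n × e) ℂ) :
    (ptrace1 X)ᴴ = ptrace1 Xᴴ := by
  ext j j'
  simp [ptrace1]

variable [Fintype e]

theorem trace_ptrace1_mul [DecidableEq n] (X : Matrix (n × e) (n × e) ℂ) (W : Matrix e e ℂ) :
    (ptrace1 X * W).trace = (X * (1 ⊗ₖ W)).trace := by
  simp only [ptrace1, trace, diag_apply, Matrix.mul_apply, of_apply, Finset.sum_mul,
    Fintype.sum_prod_type, kroneckerMap_apply, one_apply, ite_mul, one_mul, zero_mul, mul_ite,
    mul_zero, Finset.sum_ite_irrel, Finset.sum_const_zero, Finset.sum_ite_eq', Finset.mem_univ,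
    if_true]
  conv_rhs => rw [Finset.sum_comm]
  exact Finset.sum_congr rfl fun _ _ => Finset.sum_comm

variable [DecidableEq e]

theorem ptrace1_kronecker_one_mul_comm (A : Matrix n n ℂ) (X : Matrix (n × e) (n × e) ℂ) :
    ptrace1 ((A ⊗ₖ 1) * X) = ptrace1 (X * (A ⊗ₖ 1)) := by
  ext j j'
  simp only [ptrace1, Matrix.mul_apply, of_apply, Fintype.sum_prod_type, kroneckerMap_apply,
    one_apply, ite_mul, zero_mul, mul_ite, mul_one, mul_zero, Finset.sum_ite_eq,
    Finset.sum_ite_eq', Finset.mem_univ, if_true]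
  rw [Finset.sum_comm]
  exact Finset.sum_congr rfl fun _ _ => Finset.sum_congr rfl fun _ _ => mul_comm _ _

theorem Matrix.IsHermitian.ptrace1_kronecker_one_mul {A : Matrix n n ℂ} (hA : A.IsHermitian)
    {ρ : Matrix (n × e) (n × e) ℂ} (hρ : ρ.IsHermitian) :
    (ptrace1 ((A ⊗ₖ 1) * ρ)).IsHermitian := by
  rw [IsHermitian, conjTranspose_ptrace1, conjTranspose_mul, conjTranspose_kronecker, hA.eq, hρ.eq,
    conjTranspose_one, ptrace1_kronecker_one_mul_comm]

end PartialTrace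

section Positivity

variable {n : Type*} [Fintype n] [DecidableEq n]

theorem Matrix.PosSemidef.trace_mul_nonneg {A B : Matrix n n ℂ} (hA : A.PosSemidef)
    (hB : B.PosSemidef) : 0 ≤ (A * B).trace := by
  obtain ⟨C, rfl⟩ := CStarAlgebra.nonneg_iff_eq_star_mul_self.mp hA.nonneg
  rw [Matrix.mul_assoc, trace_mul_comm]
  exact (hB.mul_mul_conjTranspose_same C).trace_nonneg

theorem Matrix.IsHermitian.exists_posSemidef_mul_sub_eq_abs {T : Matrix n n ℂ}
    (hT : T.IsHermitian) :
    ∃ P Q : Matrix n n ℂ, P.PosSemidef ∧ Q.PosSemidef ∧ P + Q = 1 ∧ T * (P - Q) = CFC.abs T := by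
  have hcont : ∀ f : ℝ → ℝ, ContinuousOn f (spectrum ℝ T) := fun f =>
    (finite_real_spectrum (A := T)).continuousOn f
  set s : ℝ → ℝ := fun x => if 0 ≤ x then 1 else 0
  refine ⟨cfc s T, cfc (fun x => 1 - s x) T, ?_, ?_, ?_, ?_⟩
  · exact (cfc_nonneg fun x _ => by simp only [s]; split_ifs <;> norm_num).posSemidef
  · exact (cfc_nonneg fun x _ => by simp only [s]; split_ifs <;> norm_num).posSemidef
  · rw [← cfc_add T s _ (hcont _) (hcont _)]
    simpa using cfc_const_one ℝ T
  · rw [CFC.abs_eq_cfc_norm T, ← cfc_sub s _ T (hcont _) (hcont _)]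
    nth_rewrite 1 [← cfc_id' ℝ T]
    rw [← cfc_mul _ _ T (hcont _) (hcont _)]
    refine cfc_congr fun x _ => ?_
    simp only [s, Real.norm_eq_abs]
    split_ifs with h
    · simp [abs_of_nonneg h]
    · simp [abs_of_neg (not_le.mp h)]

end Positivity

section KroneckerOne

variable {n e : Type*} [Fintype n] [DecidableEq n] [Fintype e] [DecidableEq e]

theorem trace_ptrace1_kronecker_one_mul_mul (A : Matrix n n ℂ) (ρ : Matrix (n × e) (n × e) ℂ)
    (W : Matrix e e ℂ) : (ptrace1 ((A ⊗ₖ 1) * ρ) * W).trace = ((A ⊗ₖ W) * ρ).trace := by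
  rw [trace_ptrace1_mul, trace_mul_comm, ← Matrix.mul_assoc, ← mul_kronecker_mul, Matrix.one_mul,
    Matrix.mul_one]

theorem traceNorm_ptrace1_kronecker_one_mul_le {Δ : Matrix n n ℂ} (hΔ : Δ.IsHermitian)
    {ρ : Matrix (n × e) (n × e) ℂ} (hρ : IsDensityMatrix ρ) :
    traceNorm (ptrace1 ((Δ ⊗ₖ 1) * ρ)) ≤ specNorm Δ := by
  obtain ⟨P, Q, hP, hQ, hPQ, habs⟩ :=
    (hΔ.ptrace1_kronecker_one_mul hρ.1.1).exists_posSemidef_mul_sub_eq_abs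
  set c : ℝ := specNorm Δ
  have hle : (c • 1 - Δ).PosSemidef := by
    have := hΔ.isSelfAdjoint.le_algebraMap_norm_self
    rwa [le_iff, Algebra.algebraMap_eq_smul_one] at this
  have hge : (c • 1 + Δ).PosSemidef := by
    have := hΔ.isSelfAdjoint.neg_algebraMap_norm_le_self
    rwa [le_iff, Algebra.algebraMap_eq_smul_one, sub_neg_eq_add, add_comm] at this
  have hsplit : (c • 1 - Δ) ⊗ₖ P + (c • 1 + Δ) ⊗ₖ Q = c • 1 - Δ ⊗ₖ (P - Q) := by
    rw [eq_sub_of_add_eq' hPQ]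
    ext ⟨i, j⟩ ⟨i', j'⟩
    simp only [Matrix.add_apply, Matrix.sub_apply, Matrix.smul_apply, kroneckerMap_apply, one_apply,
      Prod.mk.injEq, ite_and]
    split_ifs <;> simp <;> ring
  have hbound : ((Δ ⊗ₖ (P - Q)) * ρ).trace ≤ (c : ℂ) := by
    have h0 := ((hle.kronecker hP).add (hge.kronecker hQ)).trace_mul_nonneg hρ.1
    rwa [hsplit, Matrix.sub_mul, trace_sub, smul_mul, Matrix.one_mul, trace_smul, hρ.2,
      Complex.real_smul, mul_one, sub_nonneg] at h0
  calc traceNorm (ptrace1 ((Δ ⊗ₖ 1) * ρ))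
      = ((Δ ⊗ₖ (P - Q)) * ρ).trace.re := by
        rw [traceNorm_eq_re_trace_abs, ← habs, trace_ptrace1_kronecker_one_mul_mul]
    _ ≤ specNorm Δ := (Complex.le_def.mp hbound).1

theorem IsDensityMatrix.kronecker {X : Matrix n n ℂ} {Y : Matrix e e ℂ} (hX : IsDensityMatrix X)
    (hY : IsDensityMatrix Y) : IsDensityMatrix (X ⊗ₖ Y) :=
  ⟨hX.1.kronecker hY.1, by rw [trace_kronecker, hX.2, hY.2, one_mul]⟩

theorem isDensityMatrix_vecMulVec {v : n → ℂ} (hv : star v ⬝ᵥ v = 1) :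
    IsDensityMatrix (vecMulVec v (star v)) :=
  ⟨posSemidef_vecMulVec_self_star v, by rw [trace_vecMulVec, dotProduct_comm, hv]⟩

theorem Matrix.IsHermitian.exists_abs_eigenvalues_eq_specNorm [Nonempty n] {A : Matrix n n ℂ}
    (hA : A.IsHermitian) : ∃ i, |hA.eigenvalues i| = specNorm A := by
  obtain ⟨z, hz, hnorm⟩ := spectrum.exists_nnnorm_eq_spectralRadius A
  rw [hA.isSelfAdjoint.spectralRadius_eq_nnnorm, ENNReal.coe_inj] at hnorm
  rw [hA.spectrum_eq_image_range] at hz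
  obtain ⟨_, ⟨i, rfl⟩, rfl⟩ := hz
  exact ⟨i, by simpa [specNorm_eq_norm, ← Real.norm_eq_abs] using congrArg NNReal.toReal hnorm⟩

theorem exists_traceNorm_ptrace1_eq_specNorm [Nonempty n] [Nonempty e] {Δ : Matrix n n ℂ}
    (hΔ : Δ.IsHermitian) :
    ∃ ρ, IsDensityMatrix ρ ∧ traceNorm (ptrace1 ((Δ ⊗ₖ (1 : Matrix e e ℂ)) * ρ)) = specNorm Δ := by
  obtain ⟨i, hi⟩ := hΔ.exists_abs_eigenvalues_eq_specNorm
  set v := (hΔ.eigenvectorBasis i).ofLp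
  have hv : star v ⬝ᵥ v = 1 := by
    rw [dotProduct_comm, ← EuclideanSpace.inner_eq_star_dotProduct, inner_self_eq_norm_sq_to_K,
      hΔ.eigenvectorBasis.orthonormal.1 i]
    simp
  set w : e → ℂ := Pi.single (Classical.arbitrary e) 1
  have hw : star w ⬝ᵥ w = 1 := by simp [w]
  have hY := isDensityMatrix_vecMulVec hw
  refine ⟨_, (isDensityMatrix_vecMulVec hv).kronecker hY, ?_⟩
  rw [← mul_kronecker_mul, Matrix.one_mul, ptrace1_kronecker, traceNorm_smul, hY.1.traceNorm_eq,
    hY.2, Complex.one_re, mul_one, ← hi, mul_vecMulVec, trace_vecMulVec,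
    hΔ.mulVec_eigenvectorBasis, smul_dotProduct, dotProduct_comm, hv, Complex.real_smul, mul_one,
    Complex.norm_real, Real.norm_eq_abs]

theorem iSup_traceNorm_ptrace1_eq_specNorm {Δ : Matrix n n ℂ} (hΔ : Δ.IsHermitian) :
    ⨆ ρ : {ρ : Matrix (n × n) (n × n) ℂ // IsDensityMatrix ρ},
      traceNorm (ptrace1 ((Δ ⊗ₖ (1 : Matrix n n ℂ)) * ρ.1)) = specNorm Δ := by
  cases isEmpty_or_nonempty n
  · have : IsEmpty {ρ : Matrix (n × n) (n × n) ℂ // IsDensityMatrix ρ} :=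
      ⟨fun ρ => by simpa [trace] using ρ.2.2⟩
    rw [Real.iSup_of_isEmpty, specNorm_eq_norm, Subsingleton.elim Δ 0, norm_zero]
  · obtain ⟨ρ₀, hρ₀, hattain⟩ := exists_traceNorm_ptrace1_eq_specNorm (e := n) hΔ
    have hle : ∀ ρ : {ρ : Matrix (n × n) (n × n) ℂ // IsDensityMatrix ρ},
        traceNorm (ptrace1 ((Δ ⊗ₖ (1 : Matrix n n ℂ)) * ρ.1)) ≤ specNorm Δ :=
      fun ρ => traceNorm_ptrace1_kronecker_one_mul_le hΔ ρ.2
    have : Nonempty {ρ : Matrix (n × n) (n × n) ℂ // IsDensityMatrix ρ} := ⟨⟨ρ₀, hρ₀⟩⟩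
    exact le_antisymm (ciSup_le hle)
      (le_ciSup_of_le ⟨_, Set.forall_mem_range.mpr hle⟩ ⟨ρ₀, hρ₀⟩ hattain.ge)

theorem sum_fin_two_traceNorm_ptrace1 {M N : Fin 2 → Matrix n n ℂ} (hM : ∑ a, M a = 1)
    (hN : ∑ a, N a = 1) (ρ : Matrix (n × e) (n × e) ℂ) :
    ∑ a, traceNorm (ptrace1 (((M a - N a) ⊗ₖ (1 : Matrix e e ℂ)) * ρ)) =
      2 * traceNorm (ptrace1 (((M 0 - N 0) ⊗ₖ (1 : Matrix e e ℂ)) * ρ)) := by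
  rw [Fin.sum_univ_two] at hM hN ⊢
  have hsub : M 1 - N 1 = -(M 0 - N 0) := by
    rw [eq_sub_of_add_eq' hM, eq_sub_of_add_eq' hN]
    abel
  rw [hsub, neg_kronecker, Matrix.neg_mul, ptrace1_neg, traceNorm_neg, two_mul]

end KroneckerOne

end

theorem diamond_distance_dichotomic_general {d m : ℕ}
    (M N : Fin m → Fin 2 → Matrix (Fin d) (Fin d) ℂ)
    (hM : IsAssemblage M) (hN : IsAssemblage N)
    (p : Fin m → ℝ) :
    Ddiamond p M N = ∑ x, p x * specNorm (M x 0 - N x 0) := by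
  have hsup : ∀ x, ⨆ ρ : {ρ : Matrix (Fin d × Fin d) (Fin d × Fin d) ℂ // IsDensityMatrix ρ},
      ∑ a, traceNorm (ptrace1 (((M x a - N x a) ⊗ₖ (1 : Matrix (Fin d) (Fin d) ℂ)) * ρ.1)) =
        2 * specNorm (M x 0 - N x 0) := fun x => by
    simp_rw [sum_fin_two_traceNorm_ptrace1 (hM.2 x) (hN.2 x)]
    rw [← Real.mul_iSup_of_nonneg zero_le_two,
      iSup_traceNorm_ptrace1_eq_specNorm ((hM.1 x 0).1.sub (hN.1 x 0).1)]
  simp only [Ddiamond, hsup, Finset.mul_sum]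
  exact Finset.sum_congr rfl fun x _ => by ring

/-- For dichotomic measurement assemblages the weighted diamond distance is given in closed
form by the spectral norm: `D⋄(M,N) = ∑ x, p x · ‖M x 0 − N x 0‖_∞`. -/
theorem diamond_distance_dichotomic {d m : ℕ}
    (M N : Fin m → Fin 2 → Matrix (Fin d) (Fin d) ℂ)
    (hM : IsAssemblage M) (hN : IsAssemblage N)
    (p : Fin m → ℝ) (hp : IsWeighting p) :
    Ddiamond p M N = ∑ x, p x * specNorm (M x 0 - N x 0) :=
  diamond_distance_dichotomic_general M N hM hN p

end
end
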